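/- Fix λ ∈ (0,1) and ρ ∈ (0,1) with λ ≤ ρ. Define f(s, q) = (1/2)·log((2πe)²s²) − ((1+λ)/2)·log((2πe)²s²(1−q²)) for s > 0, q ∈ (−1,1). Then for all s > 0 and q ∈ (−1,1) with s(1−q) ≤ 1−ρ (and q ≤ ρ), one has f(s, q) ≥ f((1−ρ)/(1−λ), λ) = (1/2)·log(1/(1−λ²)) − (λ/2)·log((2πe)²(1−ρ)²(1+λ)/(1−λ)). -/

import Mathlib

open Real

noncomputable def f9 (lam s q : ℝ) : ℝ :=
  (1/2) * Real.log ((2*π*Real.exp 1)^2 * s^2)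
    - ((1+lam)/2) * Real.log ((2*π*Real.exp 1)^2 * s^2 * (1 - q^2))

/-! The constraint `s (1 - q) ≤ 1 - ρ` gives `log s ≤ log (1 - ρ) - log (1 - q)`, which reduces the
claim to maximising `(1 - λ) log (1 - q) + (1 + λ) log (1 + q)` over `q`. Since
`(1 - q) + (1 + q) = (1 - λ) + (1 + λ)`, Gibbs' inequality for two weights puts the maximum at
`q = λ`, where the bound on `s` is attained by `s = (1 - ρ) / (1 - λ)`. -/

lemma mul_log_div_le_sub {a b : ℝ} (ha : 0 < a) (hb : 0 < b) : a * log (b / a) ≤ b - a := by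
  have h := mul_le_mul_of_nonneg_left (log_le_sub_one_of_pos (div_pos hb ha)) ha.le
  rwa [mul_sub, mul_div_cancel₀ b ha.ne', mul_one] at h

lemma mul_log_add_mul_log_le {a b x y : ℝ} (ha : 0 < a) (hb : 0 < b) (hx : 0 < x) (hy : 0 < y)
    (hsum : x + y = a + b) : a * log x + b * log y ≤ a * log a + b * log b := by
  have hxa := mul_log_div_le_sub ha hx
  have hyb := mul_log_div_le_sub hb hy
  rw [log_div hx.ne' ha.ne'] at hxa
  rw [log_div hy.ne' hb.ne'] at hyb
  linarith

lemma f9_eq (lam : ℝ) {s q : ℝ} (hs : s ≠ 0) (hq : q ∈ Set.Ioo (-1:ℝ) 1) :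
    f9 lam s q = -(lam/2) * log ((2*π*exp 1)^2) - lam * log s
      - ((1+lam)/2) * (log (1-q) + log (1+q)) := by
  obtain ⟨hq₁, hq₂⟩ := hq
  have hc : (2*π*exp 1)^2 ≠ 0 := by positivity
  have hs2 : s^2 ≠ 0 := pow_ne_zero 2 hs
  have h1q : 1 - q ≠ 0 := by linarith
  have h1q' : 1 + q ≠ 0 := by linarith
  unfold f9
  rw [show 1 - q^2 = (1-q) * (1+q) by ring, log_mul (mul_ne_zero hc hs2) (mul_ne_zero h1q h1q'),
    log_mul hc hs2, log_mul h1q h1q', log_pow s 2]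
  push_cast
  ring

lemma f9_le_of_mul_one_sub_le {lam ρ s q : ℝ} (hlam₀ : 0 ≤ lam) (hlam₁ : lam < 1) (hρ : ρ < 1)
    (hs : 0 < s) (hq : q ∈ Set.Ioo (-1:ℝ) 1) (hsq : s * (1-q) ≤ 1-ρ) :
    f9 lam ((1-ρ)/(1-lam)) lam ≤ f9 lam s q := by
  obtain ⟨hq₁, hq₂⟩ := hq
  have hlog_s : log s ≤ log (1-ρ) - log (1-q) := by
    rw [← log_div (by linarith) (by linarith)]
    exact log_le_log hs ((le_div_iff₀ (by linarith)).2 hsq)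
  have hgibbs := mul_log_add_mul_log_le (a := 1-lam) (b := 1+lam) (x := 1-q) (y := 1+q)
    (by linarith) (by linarith) (by linarith) (by linarith) (by ring)
  rw [f9_eq lam (div_pos (by linarith) (by linarith)).ne' ⟨by linarith, hlam₁⟩,
    log_div (by linarith) (by linarith), f9_eq lam hs.ne' ⟨hq₁, hq₂⟩]
  linarith [mul_le_mul_of_nonneg_left hlog_s hlam₀]

lemma f9_optimum_eq {lam ρ : ℝ} (hlam : lam ∈ Set.Ioo (-1:ℝ) 1) (hρ : ρ ≠ 1) :
    f9 lam ((1-ρ)/(1-lam)) lam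
      = (1/2) * log (1/(1-lam^2))
        - (lam/2) * log ((2*π*exp 1)^2 * (1-ρ)^2 * (1+lam)/(1-lam)) := by
  have hc : (2*π*exp 1)^2 ≠ 0 := by positivity
  have h1ρ : 1 - ρ ≠ 0 := sub_ne_zero.2 hρ.symm
  have h1ρ2 : (1-ρ)^2 ≠ 0 := pow_ne_zero 2 h1ρ
  have h1l : 1 - lam ≠ 0 := by linarith [hlam.2]
  have h1l' : 1 + lam ≠ 0 := by linarith [hlam.1]
  rw [f9_eq lam (div_ne_zero h1ρ h1l) hlam, log_div h1ρ h1l, one_div (1 - lam^2), log_inv,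
    show 1 - lam^2 = (1-lam) * (1+lam) by ring, log_mul h1l h1l',
    log_div (mul_ne_zero (mul_ne_zero hc h1ρ2) h1l') h1l, log_mul (mul_ne_zero hc h1ρ2) h1l',
    log_mul hc h1ρ2, log_pow (1-ρ) 2]
  push_cast
  ring

theorem stmt_9_general (lam ρ : ℝ) (hlam : lam ∈ Set.Ioo (0:ℝ) 1) (hρ : ρ ∈ Set.Ioo (0:ℝ) 1) :
    (∀ s q : ℝ, 0 < s → q ∈ Set.Ioo (-1:ℝ) 1 → s*(1-q) ≤ 1-ρ → q ≤ ρ →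
      f9 lam s q ≥ f9 lam ((1-ρ)/(1-lam)) lam) ∧
    f9 lam ((1-ρ)/(1-lam)) lam
      = (1/2) * Real.log (1/(1-lam^2))
        - (lam/2) * Real.log ((2*π*Real.exp 1)^2 * (1-ρ)^2 * (1+lam)/(1-lam)) :=
  ⟨fun _ _ hs hq hsq _ => f9_le_of_mul_one_sub_le hlam.1.le hlam.2 hρ.2 hs hq hsq,
    f9_optimum_eq ⟨by linarith [hlam.1], hlam.2⟩ hρ.2.ne⟩

theorem stmt_9 (lam ρ : ℝ) (hlam : lam ∈ Set.Ioo (0:ℝ) 1) (hρ : ρ ∈ Set.Ioo (0:ℝ) 1)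
    (hlr : lam ≤ ρ) :
    (∀ s q : ℝ, 0 < s → q ∈ Set.Ioo (-1:ℝ) 1 → s*(1-q) ≤ 1-ρ → q ≤ ρ →
      f9 lam s q ≥ f9 lam ((1-ρ)/(1-lam)) lam) ∧
    f9 lam ((1-ρ)/(1-lam)) lam
      = (1/2) * Real.log (1/(1-lam^2))
        - (lam/2) * Real.log ((2*π*Real.exp 1)^2 * (1-ρ)^2 * (1+lam)/(1-lam)) :=
  stmt_9_general lam ρ hlam hρ
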